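/- Let ε > 0 and u = 0. Then every solution (x, s) of (S) with initial condition (x⁰, s⁰) ∈ D converges as t → +∞ to the point ((b(0)/n)·(1,…,1), 0), where b(0) := s⁰ + Σ_{j=1}^n x⁰_j. -/

import Mathlib

/-!
The substrate obeys `s' = -s φ(t)` with `φ` bounded as long as `s` stays away from the poles
`-aⱼ` of the Monod functions, so `s` cannot cross zero. Since `T` is Metzler and negative
semidefinite, `∑ᵢ min(xᵢ, 0)²` satisfies a linear Grönwall inequality and therefore stays zero:
the biomass stays nonnegative. The columns of `T` sum to zero, so the total mass `s + ∑ᵢ xᵢ` is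
conserved; `s` decreases, and it tends to `0` since otherwise consumption would remain bounded
below. Finally, a discrete Poincaré inequality on the path `1 - 2 - ⋯ - n` gives the spectral gap
`-⟪w, T w⟫ ≥ ‖w‖² / n²` for `w ⊥ 1`, so the dispersion `g` of `x` around its mean satisfies
`g' ≤ -(2ε / n²) g + O(s)` and tends to `0`, while the mean `(b(0) - s) / n` tends to `b(0) / n`.
-/

open Matrix Filter Set Topology Asymptotics

noncomputable section

/-- The mutation matrix `T` (discrete Neumann Laplacian): `T i j = 1` if `|i-j| = 1`,
diagonal entries `-1` at the ends and `-2` inside (minus number of neighbors), `0` otherwise. -/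
def mutT (n : ℕ) : Matrix (Fin n) (Fin n) ℝ :=
  Matrix.of fun i j =>
    if ((i : ℕ) + 1 = (j : ℕ) ∨ (j : ℕ) + 1 = (i : ℕ)) then 1
    else if i = j then
      -((if 0 < (i : ℕ) then (1 : ℝ) else 0) + (if (i : ℕ) + 1 < n then (1 : ℝ) else 0))
    else 0

/-- Monod kinetics `μ(s) = m s / (a + s)`. -/
def monod (m a s : ℝ) : ℝ := m * s / (a + s)

/-- The largest eigenvalue of a (symmetric) real matrix. -/
def maxEig {n : ℕ} (A : Matrix (Fin n) (Fin n) ℝ) : ℝ :=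
  sSup {t : ℝ | ∃ v : Fin n → ℝ, v ≠ 0 ∧ A.mulVec v = t • v}

/-- The matrix `B(s,u,ε) = diag(μ₁(s),…,μₙ(s)) - u Iₙ + ε T`. -/
def Bmat (n : ℕ) (m a : Fin n → ℝ) (s u ε : ℝ) : Matrix (Fin n) (Fin n) ℝ :=
  Matrix.diagonal (fun i => monod (m i) (a i) s) - u • (1 : Matrix (Fin n) (Fin n) ℝ)
    + ε • mutT n

/-- `(x, s)` is a solution of the chemostat system with mutation (S). -/
def IsSol (n : ℕ) (m a : Fin n → ℝ) (ε u : ℝ) (x : ℝ → Fin n → ℝ) (s : ℝ → ℝ) : Prop :=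
  ∀ t : ℝ, 0 ≤ t →
    (∀ i, HasDerivAt (fun τ => x τ i)
        ((monod (m i) (a i) (s t) - u) * x t i + ε * (mutT n).mulVec (x t) i) t) ∧
    HasDerivAt s (-(∑ j, monod (m j) (a j) (s t) * x t j) + u * (1 - s t)) t

/-- Admissible initial conditions `D = (ℝ₊ⁿ \ {0}) × [0,1]`. -/
def InD (n : ℕ) (x0 : Fin n → ℝ) (s0 : ℝ) : Prop :=
  (∀ i, 0 ≤ x0 i) ∧ x0 ≠ 0 ∧ s0 ∈ Set.Icc (0 : ℝ) 1

open Finset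

theorem hasDerivAt_min_zero_sq (y : ℝ) :
    HasDerivAt (fun z : ℝ => min z 0 ^ 2) (2 * min y 0) y := by
  refine hasDerivAt_of_hasDerivAt_of_ne' (f := fun z : ℝ => min z 0 ^ 2) (g := fun z => 2 * min z 0)
    (x := 0) (fun y hy => ?_) (by fun_prop) (by fun_prop) y
  rcases hy.lt_or_gt with hy | hy
  · have hloc : (fun z : ℝ => min z 0 ^ 2) =ᶠ[𝓝 y] fun z => z ^ 2 := by
      filter_upwards [eventually_lt_nhds hy] with z hz
      rw [min_eq_left hz.le]
    simpa [min_eq_left hy.le] using (hasDerivAt_pow 2 y).congr_of_eventuallyEq hloc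
  · have hloc : (fun z : ℝ => min z 0 ^ 2) =ᶠ[𝓝 y] fun _ => 0 := by
      filter_upwards [eventually_gt_nhds hy] with z hz
      simp [min_eq_right hz.le]
    simpa [min_eq_right hy.le] using (hasDerivAt_const y (0 : ℝ)).congr_of_eventuallyEq hloc

theorem le_gronwallBound_of_hasDerivAt {f f' : ℝ → ℝ} {δ K ε a b : ℝ}
    (hf : ∀ t ∈ Icc a b, HasDerivAt f (f' t) t) (ha : f a ≤ δ)
    (bound : ∀ t ∈ Icc a b, f' t ≤ K * f t + ε) :
    ∀ t ∈ Icc a b, f t ≤ gronwallBound δ K ε (t - a) :=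
  le_gronwallBound_of_liminf_deriv_right_le
    (fun t ht => (hf t ht).continuousAt.continuousWithinAt)
    (fun t ht _ hr => (hf t (Ico_subset_Icc_self ht)).hasDerivWithinAt.liminf_right_slope_le hr)
    ha (fun t ht => bound t (Ico_subset_Icc_self ht))

theorem le_zero_of_hasDerivAt_le_mul {f f' : ℝ → ℝ} {K a b : ℝ}
    (hf : ∀ t ∈ Icc a b, HasDerivAt f (f' t) t) (ha : f a ≤ 0)
    (bound : ∀ t ∈ Icc a b, f' t ≤ K * f t) : ∀ t ∈ Icc a b, f t ≤ 0 := by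
  intro t ht
  simpa [gronwallBound_ε0_δ0] using
    le_gronwallBound_of_hasDerivAt (K := K) (ε := 0) hf ha
      (fun t ht => by simpa using bound t ht) t ht

theorem nonneg_of_hasDerivAt_ge_mul {f f' : ℝ → ℝ} {K a b : ℝ}
    (hf : ∀ t ∈ Icc a b, HasDerivAt f (f' t) t) (ha : 0 ≤ f a)
    (bound : ∀ t ∈ Icc a b, f t ≤ 0 → K * f t ≤ f' t) : ∀ t ∈ Icc a b, 0 ≤ f t := by
  have hsq := le_zero_of_hasDerivAt_le_mul (f := fun t => min (f t) 0 ^ 2) (K := 2 * K)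
    (fun t ht => (hasDerivAt_min_zero_sq (f t)).comp t (hf t ht))
    (by simp [min_eq_right ha])
    (fun t ht => by
      rcases le_total (f t) 0 with h | h
      · simp only [min_eq_left h]
        nlinarith [bound t ht h]
      · simp [min_eq_right h])
  intro t ht
  have := hsq t ht
  by_contra! hneg
  simp only [min_eq_left hneg.le] at this
  nlinarith

theorem nonneg_of_hasDerivAt_ge_mul_of_near_zero {f f' : ℝ → ℝ} {η K a b : ℝ} (hη : 0 < η)
    (hf : ∀ t ∈ Icc a b, HasDerivAt f (f' t) t) (ha : 0 ≤ f a)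
    (bound : ∀ t ∈ Icc a b, -η ≤ f t → f t ≤ 0 → K * f t ≤ f' t) :
    ∀ t ∈ Icc a b, 0 ≤ f t := by
  have hgron : ∀ τ ∈ Icc a b, (∀ t ∈ Icc a τ, -η ≤ f t) → 0 ≤ f τ := fun τ hτ hge =>
    nonneg_of_hasDerivAt_ge_mul (fun t ht => hf t ⟨ht.1, ht.2.trans hτ.2⟩) ha
      (fun t ht => bound t ⟨ht.1, ht.2.trans hτ.2⟩ (hge t ht)) τ ⟨hτ.1, le_rfl⟩
  intro t ht
  by_contra! hneg
  set S := {r ∈ Icc a t | f r ≤ -η}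
  by_cases hS : S.Nonempty
  · have hcont : ContinuousOn f (Icc a t) :=
      fun r hr => (hf r ⟨hr.1, hr.2.trans ht.2⟩).continuousAt.continuousWithinAt
    have hbdd : BddBelow S := ⟨a, fun r hr => hr.1.1⟩
    have hτ : sInf S ∈ S :=
      (hcont.preimage_isClosed_of_isClosed isClosed_Icc isClosed_Iic).csInf_mem hS hbdd
    -- `sInf S` is the first time `f` reaches `-η`: before it `f > -η`, and `f (sInf S) = -η` by
    -- the intermediate value theorem.
    have hbelow : ∀ r ∈ Icc a (sInf S), -η ≤ f r := by
      intro r hr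
      rcases hr.2.lt_or_eq with hlt | rfl
      · by_contra h
        exact (csInf_le hbdd (show r ∈ S from ⟨⟨hr.1, hr.2.trans hτ.1.2⟩, (not_le.1 h).le⟩)).not_gt
          hlt
      · obtain ⟨c, hc, hfc⟩ := intermediate_value_Icc' hτ.1.1
          (hcont.mono (Icc_subset_Icc_right hτ.1.2))
          (show -η ∈ Icc (f (sInf S)) (f a) from ⟨hτ.2, ha.trans' (neg_nonpos.2 hη.le)⟩)
        have : sInf S ≤ c := csInf_le hbdd (show c ∈ S from ⟨⟨hc.1, hc.2.trans hτ.1.2⟩, hfc.le⟩)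
        rw [← le_antisymm hc.2 this, hfc]
    have := hgron (sInf S) ⟨hτ.1.1, hτ.1.2.trans ht.2⟩ hbelow
    linarith [hτ.2]
  · refine (hgron t ht fun r hr => ?_).not_gt hneg
    by_contra h
    exact hS ⟨r, hr, (not_le.1 h).le⟩

theorem tendsto_zero_of_hasDerivAt_le_neg_mul_add {g g' r : ℝ → ℝ} {c : ℝ} (hc : 0 < c)
    (hg : ∀ᶠ t in atTop, HasDerivAt g (g' t) t) (hg0 : ∀ᶠ t in atTop, 0 ≤ g t)
    (hle : ∀ᶠ t in atTop, g' t ≤ -c * g t + r t) (hr : Tendsto r atTop (𝓝 0)) :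
    Tendsto g atTop (𝓝 0) := by
  refine tendsto_order.2 ⟨fun δ hδ => hg0.mono fun t ht => hδ.trans_le ht, fun δ hδ => ?_⟩
  obtain ⟨t₀, ht₀⟩ := eventually_atTop.1
    (hg.and (hle.and (hr.eventually (gt_mem_nhds (by positivity : 0 < c * δ / 2)))))
  have hbound : ∀ t ≥ t₀, g t ≤ gronwallBound (g t₀) (-c) (c * δ / 2) (t - t₀) := fun t ht =>
    le_gronwallBound_of_hasDerivAt (fun τ hτ => (ht₀ τ hτ.1).1) le_rfl
      (fun τ hτ => by linarith [(ht₀ τ hτ.1).2.1, (ht₀ τ hτ.1).2.2]) t ⟨ht, le_rfl⟩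
  have hlim : Tendsto (fun t => gronwallBound (g t₀) (-c) (c * δ / 2) (t - t₀)) atTop
      (𝓝 (δ / 2)) := by
    have hexp : Tendsto (fun t => Real.exp (-c * (t - t₀))) atTop (𝓝 0) :=
      Real.tendsto_exp_atBot.comp
        ((tendsto_atTop_add_const_right _ _ tendsto_id).const_mul_atTop_of_neg (by linarith))
    rw [gronwallBound_of_K_ne_0 (by linarith)]
    convert (hexp.const_mul (g t₀)).add ((hexp.sub_const 1).const_mul (c * δ / 2 / -c)) using 2
    field_simp
    ring
  filter_upwards [eventually_ge_atTop t₀, hlim.eventually (gt_mem_nhds (half_lt_self hδ))]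
    with t ht hlt
  exact (hbound t ht).trans_lt hlt

section Matrix

variable {ι : Type*} [Fintype ι] {A : Matrix ι ι ℝ}

theorem dotProduct_min_zero_mulVec_le (hA : ∀ i j, i ≠ j → 0 ≤ A i j) (x : ι → ℝ) :
    (fun i => min (x i) 0) ⬝ᵥ A *ᵥ x ≤ (fun i => min (x i) 0) ⬝ᵥ A *ᵥ fun i => min (x i) 0 := by
  simp only [dotProduct, mulVec, mul_sum]
  refine sum_le_sum fun i _ => sum_le_sum fun j _ => ?_
  rcases eq_or_ne i j with rfl | hij
  · rcases le_total (x i) 0 with h | h <;> simp [h]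
  · have : min (x i) 0 * A i j ≤ 0 :=
      mul_nonpos_of_nonpos_of_nonneg (min_le_right _ _) (hA i j hij)
    nlinarith [min_le_left (x j) 0]

theorem sum_mul_sub_sq_eq_neg_two_mul_dotProduct (hrow : ∀ i, ∑ j, A i j = 0)
    (hcol : ∀ j, ∑ i, A i j = 0) (w : ι → ℝ) :
    ∑ i, ∑ j, A i j * (w i - w j) ^ 2 = -2 * (w ⬝ᵥ A *ᵥ w) := by
  have h₁ : ∑ i, ∑ j, A i j * w i ^ 2 = 0 := by simp [← sum_mul, hrow]
  have h₂ : ∑ i, ∑ j, A i j * w j ^ 2 = 0 := by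
    rw [sum_comm]; simp [← sum_mul, hcol]
  simp only [dotProduct, mulVec, mul_sum]
  calc ∑ i, ∑ j, A i j * (w i - w j) ^ 2
      = ∑ i, ∑ j, A i j * w i ^ 2 + ∑ i, ∑ j, A i j * w j ^ 2
          - ∑ i, ∑ j, 2 * (w i * (A i j * w j)) := by
        simp only [← sum_add_distrib, ← sum_sub_distrib]
        congr! 2 with i _ j _; ring
    _ = ∑ i, ∑ j, -2 * (w i * (A i j * w j)) := by
        rw [h₁, h₂]; simp

theorem dotProduct_mulVec_self_nonpos (hA : ∀ i j, i ≠ j → 0 ≤ A i j)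
    (hrow : ∀ i, ∑ j, A i j = 0) (hcol : ∀ j, ∑ i, A i j = 0) (w : ι → ℝ) :
    w ⬝ᵥ A *ᵥ w ≤ 0 := by
  have : 0 ≤ ∑ i, ∑ j, A i j * (w i - w j) ^ 2 :=
    sum_nonneg fun i _ => sum_nonneg fun j _ => by
      rcases eq_or_ne i j with rfl | hij
      · simp
      · exact mul_nonneg (hA i j hij) (sq_nonneg _)
  linarith [sum_mul_sub_sq_eq_neg_two_mul_dotProduct hrow hcol w]

end Matrix

theorem sum_range_sq_le_of_sum_eq_zero {v : ℕ → ℝ} {n : ℕ} (hv : ∑ i ∈ range n, v i = 0) :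
    ∑ i ∈ range n, v i ^ 2 ≤ n ^ 2 * ∑ k ∈ range (n - 1), (v (k + 1) - v k) ^ 2 := by
  set E := ∑ k ∈ range (n - 1), (v (k + 1) - v k) ^ 2
  have hE : ∀ i ∈ range n, (v i - v 0) ^ 2 ≤ n * E := by
    intro i hi
    rw [Finset.mem_range] at hi
    calc (v i - v 0) ^ 2 = (∑ k ∈ range i, (v (k + 1) - v k)) ^ 2 := by rw [sum_range_sub]
      _ ≤ #(range i) * ∑ k ∈ range i, (v (k + 1) - v k) ^ 2 := sq_sum_le_card_mul_sum_sq
      _ ≤ n * E := by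
        rw [card_range]
        exact mul_le_mul (by exact_mod_cast hi.le)
          (sum_le_sum_of_subset_of_nonneg (range_subset_range.2 (by omega))
            fun _ _ _ => sq_nonneg _)
          (sum_nonneg fun _ _ => sq_nonneg _) n.cast_nonneg
  have hshift : ∑ i ∈ range n, (v i - v 0) ^ 2 = ∑ i ∈ range n, v i ^ 2 + n * v 0 ^ 2 := by
    have hcross : ∑ i ∈ range n, 2 * v i * v 0 = 0 := by rw [← sum_mul, ← mul_sum, hv]; ring
    simp only [sub_sq, sum_add_distrib, sum_sub_distrib, hcross, sum_const, card_range,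
      nsmul_eq_mul]
    ring
  calc ∑ i ∈ range n, v i ^ 2 ≤ ∑ i ∈ range n, (v i - v 0) ^ 2 := by
        rw [hshift]; nlinarith [sq_nonneg (v 0), (Nat.cast_nonneg n : (0 : ℝ) ≤ n)]
    _ ≤ ∑ _i ∈ range n, n * E := sum_le_sum hE
    _ = n ^ 2 * E := by simp; ring

theorem sum_range_ite_add_one_eq (i : ℕ) (n : ℕ) (hi : i < n) :
    ∑ l ∈ range n, (if l + 1 = i then (1 : ℝ) else 0) = if 0 < i then 1 else 0 := by
  cases i with
  | zero => simp
  | succ p => simp [sum_ite_eq', show p < n by omega]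

section mutT

variable {n : ℕ}

theorem mutT_nonneg_of_ne {i j : Fin n} (h : i ≠ j) : 0 ≤ mutT n i j := by
  simp only [mutT, of_apply, if_neg h]
  split_ifs <;> norm_num

theorem mutT_apply_comm (i j : Fin n) : mutT n i j = mutT n j i := by
  rcases eq_or_ne i j with rfl | h
  · rfl
  · simp only [mutT, of_apply, if_neg h, if_neg h.symm, or_comm]

theorem sum_mutT_row (i : Fin n) : ∑ j, mutT n i j = 0 := by
  have hsplit : ∀ j : Fin n, mutT n i j = (if (i : ℕ) + 1 = j then 1 else 0)
      + (if (j : ℕ) + 1 = i then 1 else 0)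
      - if (i : ℕ) = j then
          (if 0 < (i : ℕ) then 1 else 0) + (if (i : ℕ) + 1 < n then 1 else 0) else 0 := by
    intro j
    simp only [mutT, of_apply, Fin.ext_iff]
    split_ifs <;> first | omega | ring
  simp only [hsplit]
  rw [Fin.sum_univ_eq_sum_range (fun l => (if (i : ℕ) + 1 = l then (1 : ℝ) else 0)
      + (if l + 1 = i then 1 else 0) - if (i : ℕ) = l then
          (if 0 < (i : ℕ) then 1 else 0) + (if (i : ℕ) + 1 < n then 1 else 0) else 0) n]
  simp only [sum_sub_distrib, sum_add_distrib, sum_ite_eq, Finset.mem_range,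
    sum_range_ite_add_one_eq _ _ i.isLt, Fin.is_lt, ↓reduceIte]
  ring

theorem sum_mutT_col (j : Fin n) : ∑ i, mutT n i j = 0 := by
  simpa only [mutT_apply_comm _ j] using sum_mutT_row j

theorem mutT_mulVec_const (c : ℝ) : mutT n *ᵥ (fun _ => c) = 0 := by
  ext i
  simp [mulVec, dotProduct, ← sum_mul, sum_mutT_row]

theorem sum_mutT_mulVec (w : Fin n → ℝ) : ∑ i, (mutT n *ᵥ w) i = 0 := by
  simp only [mulVec, dotProduct]
  rw [sum_comm]
  simp [← sum_mul, sum_mutT_col]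

theorem dotProduct_mutT_mulVec_self_nonpos (w : Fin n → ℝ) : w ⬝ᵥ mutT n *ᵥ w ≤ 0 :=
  dotProduct_mulVec_self_nonpos (fun _ _ => mutT_nonneg_of_ne) sum_mutT_row sum_mutT_col w

theorem sum_mutT_mul_sub_sq (v : ℕ → ℝ) :
    ∑ i : Fin n, ∑ j : Fin n, mutT n i j * (v i - v j) ^ 2
      = 2 * ∑ k ∈ range (n - 1), (v (k + 1) - v k) ^ 2 := by
  have hsplit : ∀ i j : Fin n, mutT n i j * (v i - v j) ^ 2
      = (if (i : ℕ) + 1 = j then (v j - v i) ^ 2 else 0)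
        + (if (j : ℕ) + 1 = i then (v i - v j) ^ 2 else 0) := by
    intro i j
    rcases eq_or_ne i j with rfl | h
    · simp
    · simp only [mutT, of_apply, if_neg h]
      split_ifs <;> first | omega | ring
  have hedges : ∑ i : Fin n, ∑ j : Fin n, (if (i : ℕ) + 1 = j then (v j - v i) ^ 2 else 0)
      = ∑ k ∈ range (n - 1), (v (k + 1) - v k) ^ 2 := by
    have hinner : ∀ i : Fin n, ∑ j : Fin n, (if (i : ℕ) + 1 = j then (v j - v i) ^ 2 else 0)
        = if (i : ℕ) + 1 < n then (v (i + 1) - v i) ^ 2 else 0 := fun i => by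
      rw [Fin.sum_univ_eq_sum_range (fun l => if (i : ℕ) + 1 = l then (v l - v i) ^ 2 else 0) n,
        sum_ite_eq]
      simp only [Finset.mem_range]
    simp only [hinner]
    rw [Fin.sum_univ_eq_sum_range (fun k => if k + 1 < n then (v (k + 1) - v k) ^ 2 else 0) n,
      ← sum_filter]
    congr 1
    ext k
    simp only [Finset.mem_filter, Finset.mem_range]
    omega
  simp only [hsplit, sum_add_distrib]
  rw [sum_comm (f := fun i j : Fin n => if (j : ℕ) + 1 = i then (v i - v j) ^ 2 else 0),
    hedges]
  ring

theorem dotProduct_mutT_mulVec_comp_val (v : ℕ → ℝ) :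
    (fun i : Fin n => v i) ⬝ᵥ mutT n *ᵥ (fun i => v i)
      = -∑ k ∈ range (n - 1), (v (k + 1) - v k) ^ 2 := by
  linarith [sum_mul_sub_sq_eq_neg_two_mul_dotProduct sum_mutT_row sum_mutT_col
    (fun i : Fin n => v i), sum_mutT_mul_sub_sq (n := n) v]

theorem sum_sq_le_neg_dotProduct_mutT_mulVec {w : Fin n → ℝ} (hw : ∑ i, w i = 0) :
    ∑ i, w i ^ 2 ≤ -(n ^ 2 * (w ⬝ᵥ mutT n *ᵥ w)) := by
  set v : ℕ → ℝ := Function.extend Fin.val w 0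
  have hwv : w = fun i : Fin n => v i := funext fun i => (Fin.val_injective.extend_apply w 0 i).symm
  rw [hwv] at hw ⊢
  rw [dotProduct_mutT_mulVec_comp_val, Fin.sum_univ_eq_sum_range (fun k => v k ^ 2)]
  rw [Fin.sum_univ_eq_sum_range v] at hw
  simpa using sum_range_sq_le_of_sum_eq_zero hw

end mutT

section Monod

variable {m a s : ℝ}

theorem monod_nonneg (hm : 0 ≤ m) (ha : 0 < a) (hs : 0 ≤ s) : 0 ≤ monod m a s := by
  unfold monod; positivity

theorem monod_pos (hm : 0 < m) (ha : 0 < a) (hs : 0 < s) : 0 < monod m a s := by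
  unfold monod; positivity

theorem monod_le (hm : 0 ≤ m) (ha : 0 < a) (hs : 0 ≤ s) : monod m a s ≤ m := by
  unfold monod
  rw [div_le_iff₀ (by linarith)]
  nlinarith

theorem monod_le_div_mul (hm : 0 ≤ m) (ha : 0 < a) (hs : 0 ≤ s) : monod m a s ≤ m / a * s := by
  unfold monod
  rw [div_mul_eq_mul_div, div_le_div_iff₀ (by linarith) ha]
  nlinarith [mul_nonneg (mul_nonneg hm hs) hs]

theorem monod_mono (hm : 0 ≤ m) (ha : 0 < a) {s₁ s₂ : ℝ} (h₀ : 0 ≤ s₁) (h : s₁ ≤ s₂) :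
    monod m a s₁ ≤ monod m a s₂ := by
  unfold monod
  rw [div_le_div_iff₀ (by linarith) (by linarith)]
  nlinarith [mul_le_mul_of_nonneg_left h (mul_nonneg hm ha.le)]

theorem abs_monod_le (ha : 0 < a) (hs : -(a / 2) ≤ s) : |monod m a s| ≤ 2 * |m| / a * |s| := by
  unfold monod
  rw [abs_div, abs_mul, abs_of_pos (by linarith : 0 < a + s), div_le_iff₀ (by linarith)]
  have : 0 ≤ |m| * |s| := by positivity
  rw [show 2 * |m| / a * |s| * (a + s) = |m| * |s| * (2 * (a + s) / a) by ring]
  exact le_mul_of_one_le_right this (by rw [le_div_iff₀ ha]; linarith)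

end Monod

theorem min_zero_mul_self (y : ℝ) : min y 0 * y = min y 0 ^ 2 := by
  rcases le_total y 0 with h | h <;> simp [h, sq]

def dispersion {n : ℕ} (v : Fin n → ℝ) : ℝ := ∑ i, (v i - (∑ j, v j) / n) ^ 2

section Dispersion

variable {n : ℕ}

theorem sum_sub_mean (v : Fin n → ℝ) : ∑ i, (v i - (∑ j, v j) / n) = 0 := by
  rcases n.eq_zero_or_pos with rfl | hn
  · simp
  · rw [sum_sub_distrib, sum_const, card_univ, Fintype.card_fin, nsmul_eq_mul]
    field_simp
    ring

theorem hasDerivAt_dispersion {x : ℝ → Fin n → ℝ} {x' : Fin n → ℝ} {t : ℝ}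
    (hx : ∀ i, HasDerivAt (fun τ => x τ i) (x' i) t) :
    HasDerivAt (fun τ => dispersion (x τ)) (2 * ∑ i, (x t i - (∑ j, x t j) / n) * x' i) t := by
  have hmean := (HasDerivAt.fun_sum (u := univ) fun j _ => hx j).div_const (n : ℝ)
  refine (HasDerivAt.fun_sum (u := univ) fun i _ => ((hx i).fun_sub hmean).fun_pow 2).congr_deriv ?_
  have h : ∑ i, 2 * (x t i - (∑ j, x t j) / n) * ((∑ j, x' j) / n) = 0 := by
    rw [← sum_mul, ← mul_sum, sum_sub_mean]; ring
  calc _ = ∑ i, (2 * ((x t i - (∑ j, x t j) / n) * x' i)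
          - 2 * (x t i - (∑ j, x t j) / n) * ((∑ j, x' j) / n)) :=
        sum_congr rfl fun i _ => by push_cast; ring
    _ = _ := by rw [sum_sub_distrib, h, sub_zero, mul_sum]

theorem abs_sub_mean_le {v : Fin n → ℝ} {b : ℝ} (hn : 0 < n) (hv : ∀ i, 0 ≤ v i)
    (hb : ∑ j, v j ≤ b) (i : Fin n) : |v i - (∑ j, v j) / n| ≤ b := by
  have hsum : 0 ≤ ∑ j, v j := sum_nonneg fun j _ => hv j
  have hvi : v i ≤ ∑ j, v j := single_le_sum (fun j _ => hv j) (mem_univ i)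
  have hmean : (∑ j, v j) / n ≤ ∑ j, v j := div_le_self hsum (by exact_mod_cast hn)
  exact abs_sub_le_of_nonneg_of_le (hv i) (by linarith) (div_nonneg hsum n.cast_nonneg)
    (by linarith)

theorem tendsto_const_of_tendsto_dispersion {l : Filter ℝ} {f : ℝ → Fin n → ℝ} {L : ℝ}
    (hd : Tendsto (fun t => dispersion (f t)) l (𝓝 0))
    (hmean : Tendsto (fun t => (∑ j, f t j) / n) l (𝓝 L)) : Tendsto f l (𝓝 fun _ => L) := by
  refine tendsto_pi_nhds.2 fun i => ?_
  have hdev : Tendsto (fun t => f t i - (∑ j, f t j) / n) l (𝓝 0) := by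
    refine squeeze_zero_norm (fun t => ?_) (by simpa using hd.sqrt)
    rw [Real.norm_eq_abs, ← Real.sqrt_sq_eq_abs]
    exact Real.sqrt_le_sqrt (single_le_sum (fun j _ => sq_nonneg (f t j - (∑ j, f t j) / n))
      (mem_univ i))
  simpa using hdev.add hmean

end Dispersion

namespace IsSol

variable {n : ℕ} {m a : Fin n → ℝ} {ε : ℝ} {x : ℝ → Fin n → ℝ} {s : ℝ → ℝ}

theorem s_nonneg (hsol : IsSol n m a ε 0 x s) (ha : ∀ j, 0 < a j) (hs0 : 0 ≤ s 0) :
    ∀ t, 0 ≤ t → 0 ≤ s t := by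
  intro T hT
  obtain ⟨η, hη, hηa⟩ : ∃ η > 0, ∀ j, η ≤ a j / 2 := by
    rcases isEmpty_or_nonempty (Fin n) with h | h
    · exact ⟨1, one_pos, isEmptyElim⟩
    · obtain ⟨j₀, hj₀⟩ := Finite.exists_min a
      exact ⟨a j₀ / 2, by linarith [ha j₀], fun j => by linarith [hj₀ j]⟩
  obtain ⟨B, hB⟩ := isCompact_Icc.exists_bound_of_continuousOn (f := x) (s := Icc 0 T)
    fun t ht => (continuousAt_pi.2 fun i => ((hsol t ht.1).1 i).continuousAt).continuousWithinAt
  refine nonneg_of_hasDerivAt_ge_mul_of_near_zero (K := B * ∑ j, 2 * |m j| / a j) hη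
    (fun t ht => (hsol t ht.1).2) hs0 (fun t ht hlo hhi => ?_) T ⟨hT, le_rfl⟩
  have hterm : ∀ j, B * (2 * |m j| / a j) * s t ≤ -(monod (m j) (a j) (s t) * x t j) := by
    intro j
    have hμ := abs_monod_le (m := m j) (ha j) (show -(a j / 2) ≤ s t by linarith [hηa j])
    have hx : |x t j| ≤ B := (norm_le_pi_norm (x t) j).trans (hB t ht)
    calc B * (2 * |m j| / a j) * s t = -(2 * |m j| / a j * |s t| * B) := by
          rw [abs_of_nonpos hhi]; ring
      _ ≤ -(|monod (m j) (a j) (s t)| * |x t j|) :=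
          neg_le_neg (mul_le_mul hμ hx (abs_nonneg _)
            (mul_nonneg (div_nonneg (by positivity) (ha j).le) (abs_nonneg _)))
      _ ≤ -(monod (m j) (a j) (s t) * x t j) := by rw [← abs_mul]; exact neg_le_neg (le_abs_self _)
  calc B * (∑ j, 2 * |m j| / a j) * s t = ∑ j, B * (2 * |m j| / a j) * s t := by
        rw [mul_sum, sum_mul]
    _ ≤ ∑ j, -(monod (m j) (a j) (s t) * x t j) := sum_le_sum fun j _ => hterm j
    _ = _ := by simp [sum_neg_distrib]

theorem x_nonneg (hsol : IsSol n m a ε 0 x s) (hm : ∀ j, 0 ≤ m j) (ha : ∀ j, 0 < a j)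
    (hε : 0 ≤ ε) (hs : ∀ t, 0 ≤ t → 0 ≤ s t) (hx0 : ∀ i, 0 ≤ x 0 i) :
    ∀ t, 0 ≤ t → ∀ i, 0 ≤ x t i := by
  intro T hT i
  set y : ℝ → Fin n → ℝ := fun t i => min (x t i) 0
  have hV := le_zero_of_hasDerivAt_le_mul (f := fun t => ∑ i, y t i ^ 2) (K := 2 * ∑ j, m j)
    (fun t ht => HasDerivAt.fun_sum fun i _ =>
      (hasDerivAt_min_zero_sq _).comp t ((hsol t ht.1).1 i))
    (by simp [y, min_eq_right (hx0 _)]) (fun t ht => ?_) T ⟨hT, le_rfl⟩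
  · have hyi : y T i ^ 2 ≤ 0 :=
      (single_le_sum (fun j _ => sq_nonneg (y T j)) (mem_univ i)).trans hV
    exact min_eq_right_iff.1 (pow_eq_zero_iff two_ne_zero |>.1 (le_antisymm hyi (sq_nonneg _)))
  have hmut : y t ⬝ᵥ mutT n *ᵥ x t ≤ 0 :=
    (dotProduct_min_zero_mulVec_le (fun _ _ => mutT_nonneg_of_ne) (x t)).trans
      (dotProduct_mutT_mulVec_self_nonpos _)
  have hgrowth : ∀ i, 2 * y t i * ((monod (m i) (a i) (s t) - 0) * x t i)
      ≤ 2 * (∑ j, m j) * y t i ^ 2 := by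
    intro i
    have hμ : monod (m i) (a i) (s t) ≤ ∑ j, m j :=
      (monod_le (hm i) (ha i) (hs t ht.1)).trans (single_le_sum (fun j _ => hm j) (mem_univ i))
    rw [sub_zero, show 2 * y t i * (monod (m i) (a i) (s t) * x t i)
      = 2 * monod (m i) (a i) (s t) * (y t i * x t i) by ring, min_zero_mul_self]
    exact mul_le_mul_of_nonneg_right (by linarith) (sq_nonneg _)
  calc ∑ i, 2 * y t i * ((monod (m i) (a i) (s t) - 0) * x t i + ε * (mutT n *ᵥ x t) i)
      = ∑ i, 2 * y t i * ((monod (m i) (a i) (s t) - 0) * x t i)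
          + 2 * ε * (y t ⬝ᵥ mutT n *ᵥ x t) := by
        simp only [mul_add, sum_add_distrib, dotProduct, mul_sum]
        congr 1
        exact sum_congr rfl fun i _ => by ring
    _ ≤ ∑ i, 2 * (∑ j, m j) * y t i ^ 2 + 0 :=
        add_le_add (sum_le_sum fun i _ => hgrowth i)
          (mul_nonpos_of_nonneg_of_nonpos (by positivity) hmut)
    _ = 2 * (∑ j, m j) * ∑ i, y t i ^ 2 := by rw [add_zero, ← mul_sum]

theorem s_add_sum_x_eq (hsol : IsSol n m a ε 0 x s) (t : ℝ) (ht : 0 ≤ t) :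
    s t + ∑ i, x t i = s 0 + ∑ i, x 0 i := by
  have hder : ∀ r, 0 ≤ r → HasDerivAt (fun r => s r + ∑ i, x r i) 0 r := by
    intro r hr
    refine ((hsol r hr).2.add
      (HasDerivAt.fun_sum (u := univ) fun i _ => (hsol r hr).1 i)).congr_deriv ?_
    simp [sum_add_distrib, ← mul_sum, sum_mutT_mulVec]
  exact constant_of_has_deriv_right_zero
    (fun r hr => (hder r hr.1).continuousAt.continuousWithinAt)
    (fun r hr => (hder r hr.1).hasDerivWithinAt) t ⟨ht, le_rfl⟩

theorem antitoneOn_s (hsol : IsSol n m a ε 0 x s) (hm : ∀ j, 0 ≤ m j) (ha : ∀ j, 0 < a j)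
    (hs : ∀ t, 0 ≤ t → 0 ≤ s t) (hx : ∀ t, 0 ≤ t → ∀ i, 0 ≤ x t i) : AntitoneOn s (Ici 0) :=
  antitoneOn_of_hasDerivWithinAt_nonpos (convex_Ici 0)
    (fun t ht => (hsol t ht).2.continuousAt.continuousWithinAt)
    (fun t ht => (hsol t (interior_subset ht)).2.hasDerivWithinAt)
    fun t ht => by
      have ht : 0 ≤ t := interior_subset ht
      simpa using sum_nonneg fun j _ =>
        mul_nonneg (monod_nonneg (hm j) (ha j) (hs t ht)) (hx t ht j)

theorem tendsto_s (hsol : IsSol n m a ε 0 x s) (hm : ∀ j, 0 < m j) (ha : ∀ j, 0 < a j)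
    (hs : ∀ t, 0 ≤ t → 0 ≤ s t) (hx : ∀ t, 0 ≤ t → ∀ i, 0 ≤ x t i) (hx0 : x 0 ≠ 0) :
    Tendsto s atTop (𝓝 0) := by
  have hanti := hsol.antitoneOn_s (fun j => (hm j).le) ha hs hx
  suffices h : ∀ u > 0, ∃ t₀, 0 ≤ t₀ ∧ s t₀ < u by
    refine tendsto_order.2 ⟨fun l hl => ?_, fun u hu => ?_⟩
    · filter_upwards [eventually_ge_atTop 0] with t ht using hl.trans_le (hs t ht)
    · obtain ⟨t₀, ht₀, hlt⟩ := h u hu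
      filter_upwards [eventually_ge_atTop t₀] with t ht
      exact (hanti ht₀ (ht₀.trans ht) ht).trans_lt hlt
  intro u hu
  by_contra! hge
  obtain ⟨i₀, hi₀⟩ := Function.ne_iff.1 hx0
  have hσ : 0 < ∑ i, x 0 i :=
    sum_pos' (fun i _ => hx 0 le_rfl i) ⟨i₀, mem_univ _, (hx 0 le_rfl i₀).lt_of_ne' hi₀⟩
  have : Nonempty (Fin n) := ⟨i₀⟩
  obtain ⟨j₀, hj₀⟩ := Finite.exists_min fun j => monod (m j) (a j) u
  set κ := monod (m j₀) (a j₀) u * ∑ i, x 0 i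
  have hκ : 0 < κ := mul_pos (monod_pos (hm j₀) (ha j₀) hu) hσ
  have hrate : ∀ t, 0 ≤ t → -(∑ j, monod (m j) (a j) (s t) * x t j) + 0 * (1 - s t) ≤ -κ := by
    intro t ht
    have hmass : ∑ i, x 0 i ≤ ∑ i, x t i := by
      linarith [hsol.s_add_sum_x_eq t ht, hanti self_mem_Ici ht ht]
    have : κ ≤ ∑ j, monod (m j) (a j) (s t) * x t j :=
      calc κ ≤ monod (m j₀) (a j₀) u * ∑ i, x t i :=
            mul_le_mul_of_nonneg_left hmass (monod_pos (hm j₀) (ha j₀) hu).le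
        _ = ∑ j, monod (m j₀) (a j₀) u * x t j := mul_sum _ _ _
        _ ≤ ∑ j, monod (m j) (a j) (s t) * x t j := sum_le_sum fun j _ =>
            mul_le_mul_of_nonneg_right ((hj₀ j).trans
              (monod_mono (hm j).le (ha j) hu.le (hge t ht))) (hx t ht j)
    linarith
  have hT : 0 ≤ s 0 / κ := div_nonneg (hs 0 le_rfl) hκ.le
  have hlin : s (s 0 / κ) ≤ s 0 + -κ * (s 0 / κ) := by
    simpa [gronwallBound_K0] using le_gronwallBound_of_hasDerivAt (K := 0) (ε := -κ)
      (fun t ht => (hsol t ht.1).2) le_rfl (fun t ht => by simpa using hrate t ht.1)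
      (s 0 / κ) ⟨hT, le_rfl⟩
  rw [neg_mul, mul_div_cancel₀ _ hκ.ne'] at hlin
  linarith [hge _ hT]

theorem deriv_dispersion_le (hsol : IsSol n m a ε 0 x s) (hn : 0 < n) (hm : ∀ j, 0 ≤ m j)
    (ha : ∀ j, 0 < a j) (hε : 0 ≤ ε) (hs : ∀ t, 0 ≤ t → 0 ≤ s t)
    (hx : ∀ t, 0 ≤ t → ∀ i, 0 ≤ x t i) (t : ℝ) (ht : 0 ≤ t) :
    2 * ∑ i, (x t i - (∑ j, x t j) / n) *
        ((monod (m i) (a i) (s t) - 0) * x t i + ε * (mutT n *ᵥ x t) i)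
      ≤ -(2 * ε / n ^ 2) * dispersion (x t)
        + 2 * (s 0 + ∑ i, x 0 i) ^ 2 * (∑ i, m i / a i) * s t := by
  set b := s 0 + ∑ i, x 0 i
  set w : Fin n → ℝ := fun i => x t i - (∑ j, x t j) / n
  have hmass : ∑ i, x t i ≤ b := by linarith [hsol.s_add_sum_x_eq t ht, hs t ht]
  have hw : ∀ i, |w i| ≤ b := abs_sub_mean_le hn (hx t ht) hmass
  have hTw : mutT n *ᵥ x t = mutT n *ᵥ w := by
    rw [show w = x t - fun _ => (∑ j, x t j) / n from rfl, mulVec_sub, mutT_mulVec_const, sub_zero]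
  have hgap : dispersion (x t) ≤ -(n ^ 2 * (w ⬝ᵥ mutT n *ᵥ w)) :=
    sum_sq_le_neg_dotProduct_mutT_mulVec (sum_sub_mean (x t))
  have hgrowth : ∑ i, w i * ((monod (m i) (a i) (s t) - 0) * x t i)
      ≤ b ^ 2 * (∑ i, m i / a i) * s t := by
    rw [show b ^ 2 * (∑ i, m i / a i) * s t = ∑ i, b * (m i / a i * s t * b) by
      rw [mul_sum, sum_mul]; exact sum_congr rfl fun i _ => by ring]
    refine sum_le_sum fun i _ => ?_
    have hxi : x t i ≤ b := (single_le_sum (fun j _ => hx t ht j) (mem_univ i)).trans hmass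
    rw [sub_zero]
    calc w i * (monod (m i) (a i) (s t) * x t i)
        ≤ |w i| * (monod (m i) (a i) (s t) * x t i) :=
          mul_le_mul_of_nonneg_right (le_abs_self _)
            (mul_nonneg (monod_nonneg (hm i) (ha i) (hs t ht)) (hx t ht i))
      _ ≤ b * (m i / a i * s t * b) :=
          mul_le_mul (hw i) (mul_le_mul (monod_le_div_mul (hm i) (ha i) (hs t ht)) hxi (hx t ht i)
              (mul_nonneg (div_nonneg (hm i) (ha i).le) (hs t ht)))
            (mul_nonneg (monod_nonneg (hm i) (ha i) (hs t ht)) (hx t ht i))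
            ((abs_nonneg _).trans (hw i))
  have hnpos : (0 : ℝ) < n ^ 2 := by positivity
  have hdot : w ⬝ᵥ mutT n *ᵥ w ≤ -(dispersion (x t) / n ^ 2) := by
    rw [le_neg, div_le_iff₀ hnpos]; linarith
  calc 2 * ∑ i, w i * ((monod (m i) (a i) (s t) - 0) * x t i + ε * (mutT n *ᵥ x t) i)
      = 2 * ∑ i, w i * ((monod (m i) (a i) (s t) - 0) * x t i) + 2 * ε * (w ⬝ᵥ mutT n *ᵥ w) := by
        rw [← hTw]
        simp only [mul_add, sum_add_distrib, dotProduct, mul_sum]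
        congr 1
        exact sum_congr rfl fun i _ => by ring
    _ ≤ 2 * (b ^ 2 * (∑ i, m i / a i) * s t) + 2 * ε * -(dispersion (x t) / n ^ 2) := by
        gcongr
    _ = _ := by ring

theorem tendsto_dispersion (hsol : IsSol n m a ε 0 x s) (hn : 0 < n) (hm : ∀ j, 0 ≤ m j)
    (ha : ∀ j, 0 < a j) (hε : 0 < ε) (hs : ∀ t, 0 ≤ t → 0 ≤ s t)
    (hx : ∀ t, 0 ≤ t → ∀ i, 0 ≤ x t i) (hslim : Tendsto s atTop (𝓝 0)) :
    Tendsto (fun t => dispersion (x t)) atTop (𝓝 0) := by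
  refine tendsto_zero_of_hasDerivAt_le_neg_mul_add (c := 2 * ε / n ^ 2) (by positivity)
    ((eventually_ge_atTop 0).mono fun t ht => hasDerivAt_dispersion (hsol t ht).1)
    (Eventually.of_forall fun t => sum_nonneg fun i _ => sq_nonneg _)
    ((eventually_ge_atTop 0).mono fun t ht => hsol.deriv_dispersion_le hn hm ha hε.le hs hx t ht)
    (by simpa using hslim.const_mul (2 * (s 0 + ∑ i, x 0 i) ^ 2 * ∑ i, m i / a i))

end IsSol

/-- batch mode (`u = 0`): every solution starting in `D` converges to
`((b(0)/n)·(1,…,1), 0)` where `b(0) = s(0) + Σⱼ xⱼ(0)`. -/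
theorem stmt_17 (n : ℕ) (hn : 1 ≤ n) (m a : Fin n → ℝ)
    (hm : ∀ i, 0 < m i) (ha : ∀ i, 0 < a i)
    (ε : ℝ) (hε : 0 < ε)
    (x : ℝ → Fin n → ℝ) (s : ℝ → ℝ) (hsol : IsSol n m a ε 0 x s)
    (hinit : InD n (x 0) (s 0)) :
    Tendsto (fun t => (x t, s t)) atTop
      (𝓝 ((fun _ => (s 0 + ∑ j, x 0 j) / (n : ℝ)), (0 : ℝ))) := by
  obtain ⟨hx0, hx0ne, hs0, -⟩ := hinit
  have hs := hsol.s_nonneg ha hs0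
  have hx := hsol.x_nonneg (fun i => (hm i).le) ha hε.le hs hx0
  have hslim := hsol.tendsto_s hm ha hs hx hx0ne
  have hmean : Tendsto (fun t => (∑ j, x t j) / n) atTop (𝓝 ((s 0 + ∑ j, x 0 j) / n)) := by
    refine (by simpa using (tendsto_const_nhds.sub hslim).div_const (n : ℝ) :
      Tendsto (fun t => (s 0 + ∑ j, x 0 j - s t) / n) atTop _).congr' ?_
    filter_upwards [eventually_ge_atTop 0] with t ht
    rw [← hsol.s_add_sum_x_eq t ht, add_sub_cancel_left]
  exact (tendsto_const_of_tendsto_dispersion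
    (hsol.tendsto_dispersion hn (fun i => (hm i).le) ha hε hs hx hslim) hmean).prodMk_nhds hslim
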